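/- arXiv:0905.3813 — 3 statements merged into one kernel-verified Lean document; each statement's English description precedes it below -/
import Mathlib

section
/- Fix N, p ≥ 1 and β ∈ ℝ. With F(λ) the quenched pressure Σ_k e^{−λ}λ^k/k! N^{−pk} Σ_i ln Z(k,i), for every λ > 0 one has the absolutely convergent series representation F′(λ) = ln cosh β − Σ_{n=1}^∞ ((−1)^n/n) (tanh β)^n ⟨q_{1…n}^p⟩_λ, where ⟨q_{1…n}^p⟩_λ = Σ_k e^{−λ}λ^k/k! N^{−pk} Σ_i Ω_{k,i}( (N^{−1} Σ_{r=1}^N σ^1_r⋯σ^n_r)^p ) and Ω_{k,i} is the n-fold product of the Gibbs state ω_{k,i}. (This is the paper's exact formula for d/dα A(α,β) expressed via the multi-overlaps, before taking the thermodynamic limit.) -/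
/-- Spin value (±1) of a Boolean; configurations on N sites are `Fin N → Bool`. -/
noncomputable def spin (b : Bool) : ℝ := if b then 1 else -1

/-- Partition function of the diluted p-spin Hamiltonian with k interaction terms. -/
noncomputable def Zdil (N p : ℕ) (β : ℝ) (k : ℕ) (i : Fin k → Fin p → Fin N) : ℝ :=
  ∑ σ : Fin N → Bool, Real.exp (β * ∑ ν : Fin k, ∏ l : Fin p, spin (σ (i ν l)))

/-- n-fold replicated (product) Gibbs average, the replicas sharing the disorder. -/
noncomputable def replicated (N p : ℕ) (β : ℝ) (k : ℕ) (i : Fin k → Fin p → Fin N)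
    (n : ℕ) (g : (Fin n → (Fin N → Bool)) → ℝ) : ℝ :=
  (∑ σs : Fin n → (Fin N → Bool),
      g σs * ∏ a : Fin n,
        Real.exp (β * ∑ ν : Fin k, ∏ l : Fin p, spin (σs a (i ν l))))
    / (Zdil N p β k i) ^ n

/-- Quenched expectation at Poisson mean λ. -/
noncomputable def quenched (N p : ℕ) (lam : ℝ)
    (f : (k : ℕ) → (Fin k → Fin p → Fin N) → ℝ) : ℝ :=
  ∑' k : ℕ, Real.exp (-lam) * lam ^ k / (Nat.factorial k : ℝ) *
    ((1 / (N : ℝ) ^ (p * k)) * ∑ i : Fin k → Fin p → Fin N, f k i)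

/-- Quenched average ⟨q_{1…n}^p⟩ of the p-th power of the n-replica multi-overlap. -/
noncomputable def overlapAvg (N p : ℕ) (β : ℝ) (lam : ℝ) (n : ℕ) : ℝ :=
  quenched N p lam (fun k i => replicated N p β k i n
    (fun σs => ((1 / (N : ℝ)) * ∑ r : Fin N, ∏ a : Fin n, spin (σs a r)) ^ p))

/-!
For `s = ±1` one has `exp (β s) = cosh β (1 + s tanh β)`, so adding one bond `j` to a disorder
`i` multiplies the partition function by `cosh β (1 + tanh β ω(s_j))`, where `s_j` is the product
of the spins of the bond and `ω` the Gibbs state of `i`. Writing `c_k` for the average of `log Z`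
over the `N ^ (p k)` disorders with `k` bonds, this gives
`c_{k+1} - c_k = log cosh β + 𝔼_{i,j} log (1 + tanh β ω(s_j))`. Expanding the logarithm, the
average over the uniform bond `j` turns `ω(s_j) ^ n` into the replicated average of
`q_{1…n} ^ p`.
Differentiating the Poisson weights in `λ` shifts `k`, so `F'(λ) = E_λ[c_{k+1} - c_k]`; the
double series over `k` and `n` may be exchanged because `|tanh β| < 1` and every average is
bounded by `1`.
-/

namespace DilutedPSpin

open Finset Real
open scoped BigOperators Nat

noncomputable section

lemma exp_mul_eq_cosh_mul_one_add_tanh_mul (β : ℝ) {s : ℝ} (hs : s = 1 ∨ s = -1) :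
    exp (β * s) = cosh β * (1 + tanh β * s) := by
  have hc : cosh β ≠ 0 := (cosh_pos β).ne'
  rcases hs with rfl | rfl
  · rw [mul_one, mul_one, ← cosh_add_sinh, tanh_eq_sinh_div_cosh]
    field_simp
  · rw [mul_neg_one, mul_neg_one, ← cosh_sub_sinh, tanh_eq_sinh_div_cosh]
    field_simp
    ring

section UniformAverage

variable {ι κ : Type*} [Fintype ι]

lemma hasSum_expect {f : ι → κ → ℝ} {a : ι → ℝ} (h : ∀ i, HasSum (f i) (a i)) :
    HasSum (fun n => 𝔼 i, f i n) (𝔼 i, a i) := by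
  simp only [Fintype.expect_eq_sum_div_card]
  exact (hasSum_sum fun i _ => h i).div_const _

lemma abs_expect_le_of_abs_le {f : ι → ℝ} {C : ℝ} (hC : 0 ≤ C) (h : ∀ i, |f i| ≤ C) :
    |𝔼 i, f i| ≤ C := by
  rcases isEmpty_or_nonempty ι with hι | hι
  · simpa [univ_eq_empty] using hC
  · exact (abs_expect_le _ _).trans (expect_le univ_nonempty fun i _ => h i)

end UniformAverage

def logCoeff (θ : ℝ) (n : ℕ) : ℝ := (-1) ^ (n + 1) / (n + 1 : ℝ) * θ ^ (n + 1)

lemma hasSum_logCoeff_mul_pow {θ x : ℝ} (h : |θ * x| < 1) :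
    HasSum (fun n => logCoeff θ n * x ^ (n + 1)) (-log (1 + θ * x)) := by
  have h' := hasSum_pow_div_log_of_abs_lt_one (x := -(θ * x)) (by rwa [abs_neg])
  rw [sub_neg_eq_add] at h'
  convert h' using 2 with n
  rw [logCoeff, neg_pow (θ * x), mul_pow]
  ring

lemma abs_logCoeff_le (θ : ℝ) (n : ℕ) : |logCoeff θ n| ≤ |θ| ^ (n + 1) := by
  rw [logCoeff, abs_mul, abs_div, abs_pow, abs_pow, abs_neg, abs_one, one_pow]
  refine mul_le_of_le_one_left (by positivity) ?_
  rw [abs_of_pos (by positivity)]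
  exact div_le_one_of_le₀ (by simp) (by positivity)

lemma summable_abs_logCoeff_tanh (β : ℝ) : Summable fun n => |logCoeff (tanh β) n| := by
  refine .of_nonneg_of_le (fun n => abs_nonneg _) (abs_logCoeff_le _) ?_
  simp_rw [pow_succ]
  exact (summable_geometric_of_lt_one (abs_nonneg _) (abs_tanh_lt_one β)).mul_right _

def poissonWeight (lam : ℝ) (k : ℕ) : ℝ := exp (-lam) * lam ^ k / k !

lemma hasSum_poissonWeight (lam : ℝ) : HasSum (poissonWeight lam) 1 := by
  have h := (NormedSpace.expSeries_div_hasSum_exp lam).mul_left (exp (-lam))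
  rw [← exp_eq_exp_ℝ, ← exp_add, neg_add_cancel, exp_zero] at h
  have hπ : poissonWeight lam = fun k => exp (-lam) * (lam ^ k / k !) :=
    funext fun k => mul_div_assoc _ _ _
  rwa [hπ]

lemma summable_abs_poissonWeight (lam : ℝ) : Summable fun k => |poissonWeight lam k| := by
  refine ((Real.summable_pow_div_factorial |lam|).mul_left (exp (-lam))).congr fun k => ?_
  rw [poissonWeight, abs_div, abs_mul, abs_pow, abs_of_pos (exp_pos _), Nat.abs_cast,
    mul_div_assoc]

section ExponentialGrowth

variable {c : ℕ → ℝ} {C M : ℝ}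

lemma abs_pow_div_factorial_mul_le (hc : ∀ k, |c k| ≤ C * M ^ k) {y R : ℝ} (hy : |y| ≤ R)
    (k : ℕ) : |y ^ k / k ! * c k| ≤ C * ((R * M) ^ k / k !) := by
  have hR : 0 ≤ R := (abs_nonneg y).trans hy
  rw [abs_mul, abs_div, abs_pow, Nat.abs_cast]
  calc |y| ^ k / k ! * |c k| ≤ R ^ k / k ! * (C * M ^ k) := by gcongr; exact hc k
    _ = C * ((R * M) ^ k / k !) := by ring

lemma summable_pow_div_factorial_mul (hc : ∀ k, |c k| ≤ C * M ^ k) (y : ℝ) :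
    Summable fun k => y ^ k / k ! * c k :=
  .of_norm_bounded ((Real.summable_pow_div_factorial _).mul_left C)
    (abs_pow_div_factorial_mul_le hc le_rfl)

lemma hasDerivAt_pow_succ_div_factorial (k : ℕ) (y : ℝ) :
    HasDerivAt (fun y : ℝ => y ^ (k + 1) / ((k + 1)! : ℝ)) (y ^ k / k !) y := by
  refine ((hasDerivAt_pow (k + 1) y).div_const _).congr_deriv ?_
  rw [Nat.factorial_succ]
  push_cast
  field_simp

lemma hasDerivAt_tsum_pow_div_factorial_mul (hc : ∀ k, |c k| ≤ C * M ^ k) (x : ℝ) :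
    HasDerivAt (fun y => ∑' k, y ^ k / k ! * c k) (∑' k, x ^ k / k ! * c (k + 1)) x := by
  have hc' : ∀ k, |c (k + 1)| ≤ C * M * M ^ k := fun k => (hc (k + 1)).trans_eq (by ring)
  have hshift : (fun y => ∑' k, y ^ k / k ! * c k)
      = fun y => c 0 + ∑' k, y ^ (k + 1) / ((k + 1)! : ℝ) * c (k + 1) := by
    funext y
    rw [(summable_pow_div_factorial_mul hc y).tsum_eq_zero_add]
    simp
  have hball : ∀ y ∈ Metric.ball (0 : ℝ) (|x| + 1), |y| ≤ |x| + 1 := fun y hy =>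
    (mem_ball_zero_iff.1 hy).le
  rw [hshift]
  refine (hasDerivAt_tsum_of_isPreconnected
    (g := fun k y => y ^ (k + 1) / ((k + 1)! : ℝ) * c (k + 1))
    ((Real.summable_pow_div_factorial _).mul_left _)
    Metric.isOpen_ball (convex_ball _ _).isPreconnected
    (fun k y _ => (hasDerivAt_pow_succ_div_factorial k y).mul_const (c (k + 1)))
    (fun k y hy => abs_pow_div_factorial_mul_le hc' (hball y hy) k)
    (Metric.mem_ball_self (by positivity)) (by simp) ?_).const_add (c 0)
  exact mem_ball_zero_iff.2 (by simp)

lemma hasDerivAt_tsum_poissonWeight_mul (hc : ∀ k, |c k| ≤ C * M ^ k) (x : ℝ) :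
    HasDerivAt (fun l => ∑' k, poissonWeight l k * c k)
      (∑' k, poissonWeight x k * (c (k + 1) - c k)) x := by
  have hc' : ∀ k, |c (k + 1)| ≤ C * M * M ^ k := fun k => (hc (k + 1)).trans_eq (by ring)
  have hfun : (fun l => ∑' k, poissonWeight l k * c k)
      = fun l => exp (-l) * ∑' k, l ^ k / k ! * c k := by
    funext l
    rw [← tsum_mul_left]
    exact tsum_congr fun k => by rw [poissonWeight]; ring
  have hval : ∑' k, poissonWeight x k * (c (k + 1) - c k)
      = exp (-x) * -1 * ∑' k, x ^ k / k ! * c k + exp (-x) * ∑' k, x ^ k / k ! * c (k + 1) := by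
    rw [← tsum_mul_left, ← tsum_mul_left, ← Summable.tsum_add
      ((summable_pow_div_factorial_mul hc x).mul_left _)
      ((summable_pow_div_factorial_mul (c := fun k => c (k + 1)) hc' x).mul_left _)]
    exact tsum_congr fun k => by rw [poissonWeight]; ring
  rw [hfun, hval]
  exact (hasDerivAt_neg x).exp.mul (hasDerivAt_tsum_pow_div_factorial_mul hc x)

end ExponentialGrowth

section AbsolutelyConvergent

variable {ι κ : Type*}

lemma abs_tsum_mul_le {u w : ι → ℝ} {C : ℝ} (hu : Summable fun k => |u k|)
    (hw : ∀ k, |w k| ≤ C) : |∑' k, u k * w k| ≤ (∑' k, |u k|) * C :=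
  tsum_of_norm_bounded (hu.hasSum.mul_right C) fun k => by
    rw [Real.norm_eq_abs, abs_mul]
    exact mul_le_mul_of_nonneg_left (hw k) (abs_nonneg _)

lemma summable_mul_of_abs_le {u w : ι → ℝ} {C : ℝ} (hu : Summable fun k => |u k|)
    (hw : ∀ k, |w k| ≤ C) : Summable fun k => u k * w k :=
  .of_norm_bounded (hu.mul_right C) fun k => by
    rw [Real.norm_eq_abs, abs_mul]
    exact mul_le_mul_of_nonneg_left (hw k) (abs_nonneg _)

lemma tsum_mul_tsum_mul_comm {u : ι → ℝ} {v : κ → ℝ} {R : ι → κ → ℝ} {C : ℝ}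
    (hu : Summable fun k => |u k|) (hv : Summable fun n => |v n|) (hR : ∀ k n, |R k n| ≤ C) :
    ∑' k, u k * ∑' n, v n * R k n = ∑' n, v n * ∑' k, u k * R k n := by
  have hnorm : Summable fun x : ι × κ => ‖u x.1 * v x.2‖ :=
    Summable.mul_norm (by simpa only [Real.norm_eq_abs] using hu)
      (by simpa only [Real.norm_eq_abs] using hv)
  have hsum : Summable (Function.uncurry fun k n => u k * (v n * R k n)) :=
    .of_norm_bounded (hnorm.mul_right C) fun x => by
      simp only [Function.uncurry, norm_mul, Real.norm_eq_abs, ← mul_assoc]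
      exact mul_le_mul_of_nonneg_left (hR x.1 x.2) (by positivity)
  calc ∑' k, u k * ∑' n, v n * R k n = ∑' k, ∑' n, u k * (v n * R k n) :=
        tsum_congr fun k => tsum_mul_left.symm
    _ = ∑' n, ∑' k, u k * (v n * R k n) := hsum.tsum_comm.symm
    _ = ∑' n, v n * ∑' k, u k * R k n := tsum_congr fun n => by
        rw [← tsum_mul_left]
        exact tsum_congr fun k => mul_left_comm _ _ _

end AbsolutelyConvergent

lemma spin_mul_self (b : Bool) : spin b * spin b = 1 := by
  cases b <;> norm_num [spin]

lemma prod_spin_eq_one_or_eq_neg_one {α : Type*} [Fintype α] (f : α → Bool) :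
    ∏ a, spin (f a) = 1 ∨ ∏ a, spin (f a) = -1 := by
  rw [← mul_self_eq_one_iff, ← prod_mul_distrib]
  simp [spin_mul_self]

lemma abs_prod_spin {α : Type*} [Fintype α] (f : α → Bool) : |∏ a, spin (f a)| = 1 := by
  rcases prod_spin_eq_one_or_eq_neg_one f with h | h <;> simp [h]

variable {N p k : ℕ}

def bondSpin (j : Fin p → Fin N) (σ : Fin N → Bool) : ℝ := ∏ l, spin (σ (j l))

def boltzmann (β : ℝ) (i : Fin k → Fin p → Fin N) (σ : Fin N → Bool) : ℝ :=
  exp (β * ∑ ν, bondSpin (i ν) σ)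

def gibbs (β : ℝ) (i : Fin k → Fin p → Fin N) (g : (Fin N → Bool) → ℝ) : ℝ :=
  (∑ σ, g σ * boltzmann β i σ) / Zdil N p β k i

def multiOverlapPow (N p n : ℕ) (σs : Fin n → Fin N → Bool) : ℝ :=
  ((1 / (N : ℝ)) * ∑ r, ∏ a, spin (σs a r)) ^ p

lemma boltzmann_pos (β : ℝ) (i : Fin k → Fin p → Fin N) (σ : Fin N → Bool) :
    0 < boltzmann β i σ :=
  exp_pos _

lemma Zdil_eq_sum_boltzmann (β : ℝ) (i : Fin k → Fin p → Fin N) :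
    Zdil N p β k i = ∑ σ, boltzmann β i σ := rfl

lemma Zdil_pos (β : ℝ) (i : Fin k → Fin p → Fin N) : 0 < Zdil N p β k i :=
  sum_pos (fun σ _ => boltzmann_pos β i σ) univ_nonempty

lemma abs_gibbs_le_one (β : ℝ) (i : Fin k → Fin p → Fin N) {g : (Fin N → Bool) → ℝ}
    (hg : ∀ σ, |g σ| ≤ 1) : |gibbs β i g| ≤ 1 := by
  have hZ := Zdil_pos β i
  rw [gibbs, abs_div, abs_of_pos hZ, div_le_one hZ, Zdil_eq_sum_boltzmann]
  refine (abs_sum_le_sum_abs _ _).trans (sum_le_sum fun σ _ => ?_)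
  rw [abs_mul, abs_of_pos (boltzmann_pos β i σ)]
  exact mul_le_of_le_one_left (boltzmann_pos β i σ).le (hg σ)

lemma abs_tanh_mul_gibbs_bondSpin_lt_one (β : ℝ) (i : Fin k → Fin p → Fin N)
    (j : Fin p → Fin N) : |tanh β * gibbs β i (bondSpin j)| < 1 := by
  rw [abs_mul]
  exact mul_lt_one_of_nonneg_of_lt_one_left (abs_nonneg _) (abs_tanh_lt_one β)
    (abs_gibbs_le_one β i fun σ => (abs_prod_spin _).le)

lemma replicated_prod_eq_gibbs_pow (β : ℝ) (i : Fin k → Fin p → Fin N)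
    (g : (Fin N → Bool) → ℝ) (n : ℕ) :
    replicated N p β k i n (fun σs => ∏ a, g (σs a)) = gibbs β i g ^ n := by
  rw [gibbs, div_pow, Fintype.sum_pow, replicated]
  simp only [prod_mul_distrib]
  rfl

lemma boltzmann_cons (β : ℝ) (i : Fin k → Fin p → Fin N) (j : Fin p → Fin N)
    (σ : Fin N → Bool) :
    boltzmann β (Fin.cons j i : Fin (k + 1) → Fin p → Fin N) σ
      = cosh β * (boltzmann β i σ + tanh β * (bondSpin j σ * boltzmann β i σ)) := by
  rw [boltzmann, Fin.sum_univ_succ, Fin.cons_zero, mul_add, exp_add,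
    exp_mul_eq_cosh_mul_one_add_tanh_mul β (s := bondSpin j σ) (prod_spin_eq_one_or_eq_neg_one _)]
  simp only [Fin.cons_succ]
  rw [boltzmann]
  ring

lemma Zdil_cons (β : ℝ) (i : Fin k → Fin p → Fin N) (j : Fin p → Fin N) :
    Zdil N p β (k + 1) (Fin.cons j i)
      = cosh β * Zdil N p β k i * (1 + tanh β * gibbs β i (bondSpin j)) := by
  have hZ := (Zdil_pos β i).ne'
  rw [Zdil_eq_sum_boltzmann] at hZ
  simp only [Zdil_eq_sum_boltzmann, boltzmann_cons, gibbs, ← mul_sum, sum_add_distrib]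
  field_simp

lemma log_Zdil_cons (β : ℝ) (i : Fin k → Fin p → Fin N) (j : Fin p → Fin N) :
    log (Zdil N p β (k + 1) (Fin.cons j i))
      = log (cosh β) + log (Zdil N p β k i) + log (1 + tanh β * gibbs β i (bondSpin j)) := by
  have hpos : 0 < 1 + tanh β * gibbs β i (bondSpin j) := by
    linarith [(abs_lt.mp (abs_tanh_mul_gibbs_bondSpin_lt_one β i j)).1]
  rw [Zdil_cons, log_mul (mul_pos (cosh_pos β) (Zdil_pos β i)).ne' hpos.ne',
    log_mul (cosh_pos β).ne' (Zdil_pos β i).ne']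

lemma card_bonds : (Fintype.card (Fin p → Fin N) : ℝ) = (N : ℝ) ^ p := by
  simp

lemma card_disorder : (Fintype.card (Fin k → Fin p → Fin N) : ℝ) = (N : ℝ) ^ (p * k) := by
  simp [pow_mul]

lemma expect_prod_bondSpin {n : ℕ} (σs : Fin n → Fin N → Bool) :
    𝔼 j : Fin p → Fin N, ∏ a, bondSpin j (σs a) = multiOverlapPow N p n σs := by
  simp only [bondSpin]
  simp_rw [prod_comm (s := (univ : Finset (Fin n)))]
  rw [Fintype.expect_eq_sum_div_card, ← Fintype.sum_pow (fun r => ∏ a, spin (σs a r)),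
    card_bonds, multiOverlapPow, one_div_mul_eq_div, div_pow]

lemma expect_gibbs_bondSpin_pow (β : ℝ) (i : Fin k → Fin p → Fin N) (n : ℕ) :
    𝔼 j : Fin p → Fin N, gibbs β i (bondSpin j) ^ n
      = replicated N p β k i n (multiOverlapPow N p n) := by
  simp_rw [← replicated_prod_eq_gibbs_pow, replicated, ← expect_prod_bondSpin]
  rw [← expect_div, expect_sum_comm]
  simp_rw [expect_mul]

lemma hasSum_logCoeff_mul_replicated (β : ℝ) (i : Fin k → Fin p → Fin N) :
    HasSum
      (fun n => logCoeff (tanh β) n * replicated N p β k i (n + 1) (multiOverlapPow N p (n + 1)))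
      (-𝔼 j : Fin p → Fin N, log (1 + tanh β * gibbs β i (bondSpin j))) := by
  have h := hasSum_expect fun j : Fin p → Fin N =>
    hasSum_logCoeff_mul_pow (abs_tanh_mul_gibbs_bondSpin_lt_one β i j)
  simpa only [← mul_expect, expect_gibbs_bondSpin_pow, expect_neg_distrib] using h

lemma abs_mul_sum_bondSpin_le (β : ℝ) (i : Fin k → Fin p → Fin N) (σ : Fin N → Bool) :
    |β * ∑ ν, bondSpin (i ν) σ| ≤ |β| * k := by
  rw [abs_mul]
  gcongr
  refine (abs_sum_le_sum_abs _ _).trans_eq ?_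
  simp [bondSpin, abs_prod_spin]

lemma abs_log_Zdil_le (β : ℝ) (i : Fin k → Fin p → Fin N) :
    |log (Zdil N p β k i)| ≤ N * log 2 + |β| * k := by
  have hH := abs_mul_sum_bondSpin_le β i
  have hlower : exp (-(|β| * k)) ≤ Zdil N p β k i :=
    (exp_le_exp.2 (neg_le_of_abs_le (hH fun _ => true))).trans
      (single_le_sum (fun σ _ => (boltzmann_pos β i σ).le) (mem_univ _))
  have hupper : Zdil N p β k i ≤ 2 ^ N * exp (|β| * k) := by
    calc Zdil N p β k i ≤ ∑ _σ : Fin N → Bool, exp (|β| * k) :=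
          sum_le_sum fun σ _ => exp_le_exp.2 (le_of_abs_le (hH σ))
      _ = 2 ^ N * exp (|β| * k) := by simp
  have hlog_lower := log_le_log (exp_pos _) hlower
  have hlog_upper := log_le_log (Zdil_pos β i) hupper
  rw [log_exp] at hlog_lower
  rw [log_mul (by positivity) (exp_pos _).ne', log_exp, log_pow] at hlog_upper
  rw [abs_le]
  constructor <;> linarith [mul_nonneg N.cast_nonneg (log_nonneg one_le_two)]

variable (N p) in
def avgLogZ (β : ℝ) (k : ℕ) : ℝ := 𝔼 i : Fin k → Fin p → Fin N, log (Zdil N p β k i)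

variable (N p) in
def avgOverlapPow (β : ℝ) (k n : ℕ) : ℝ :=
  𝔼 i : Fin k → Fin p → Fin N, replicated N p β k i n (multiOverlapPow N p n)

lemma quenched_eq_tsum (lam : ℝ) (f : (k : ℕ) → (Fin k → Fin p → Fin N) → ℝ) :
    quenched N p lam f = ∑' k, poissonWeight lam k * 𝔼 i, f k i := by
  refine tsum_congr fun k => ?_
  rw [Fintype.expect_eq_sum_div_card, card_disorder, poissonWeight]
  ring

lemma abs_avgLogZ_le (β : ℝ) (k : ℕ) : |avgLogZ N p β k| ≤ (N * log 2 + |β|) * 2 ^ k := by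
  have hk : (k : ℝ) ≤ 2 ^ k := by exact_mod_cast Nat.lt_two_pow_self.le
  have h1 : (1 : ℝ) ≤ 2 ^ k := one_le_pow₀ one_le_two
  refine abs_expect_le_of_abs_le (by positivity) fun i => (abs_log_Zdil_le β i).trans ?_
  rw [add_mul]
  exact add_le_add (le_mul_of_one_le_right (by positivity) h1)
    (mul_le_mul_of_nonneg_left hk (abs_nonneg β))

lemma abs_avgOverlapPow_le_one (β : ℝ) (k n : ℕ) : |avgOverlapPow N p β k n| ≤ 1 := by
  refine abs_expect_le_of_abs_le zero_le_one fun i => ?_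
  rw [← expect_gibbs_bondSpin_pow]
  refine abs_expect_le_of_abs_le zero_le_one fun j => ?_
  rw [abs_pow]
  exact pow_le_one₀ (abs_nonneg _) (abs_gibbs_le_one β i fun σ => (abs_prod_spin _).le)

lemma avgLogZ_succ [Nonempty (Fin N)] (β : ℝ) (k : ℕ) :
    avgLogZ N p β (k + 1) = log (cosh β) + avgLogZ N p β k
      + 𝔼 i : Fin k → Fin p → Fin N, 𝔼 j : Fin p → Fin N,
          log (1 + tanh β * gibbs β i (bondSpin j)) := by
  rw [avgLogZ, ← Fintype.expect_equiv (Fin.consEquiv fun _ => Fin p → Fin N)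
    (fun x => log (Zdil N p β (k + 1) (Fin.cons x.1 x.2))) _ fun _ => rfl,
    ← univ_product_univ,
    expect_product' univ univ fun j i => log (Zdil N p β (k + 1) (Fin.cons j i))]
  simp only [log_Zdil_cons, expect_add_distrib, Fintype.expect_const]
  rw [expect_comm, avgLogZ]

lemma avgLogZ_succ_sub [Nonempty (Fin N)] (β : ℝ) (k : ℕ) :
    avgLogZ N p β (k + 1) - avgLogZ N p β k
      = log (cosh β) - ∑' n, logCoeff (tanh β) n * avgOverlapPow N p β k (n + 1) := by
  have h := hasSum_expect fun i : Fin k → Fin p → Fin N => hasSum_logCoeff_mul_replicated β i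
  simp only [← mul_expect, expect_neg_distrib] at h
  simp only [avgLogZ_succ, avgOverlapPow, h.tsum_eq]
  ring

lemma hasDerivAt_quenched_log_Zdil [Nonempty (Fin N)] (β lam : ℝ) :
    HasDerivAt (fun l => quenched N p l fun k i => log (Zdil N p β k i))
      (log (cosh β) - ∑' k, poissonWeight lam k *
        ∑' n, logCoeff (tanh β) n * avgOverlapPow N p β k (n + 1)) lam := by
  have hF : (fun l => quenched N p l fun k i => log (Zdil N p β k i))
      = fun l => ∑' k, poissonWeight l k * avgLogZ N p β k :=
    funext fun l => quenched_eq_tsum l _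
  have hL : ∀ k, |∑' n, logCoeff (tanh β) n * avgOverlapPow N p β k (n + 1)|
      ≤ ∑' n, |logCoeff (tanh β) n| := fun k =>
    (abs_tsum_mul_le (summable_abs_logCoeff_tanh β) fun n =>
      abs_avgOverlapPow_le_one β k (n + 1)).trans_eq (mul_one _)
  rw [hF]
  convert hasDerivAt_tsum_poissonWeight_mul (abs_avgLogZ_le β) lam using 1
  simp_rw [avgLogZ_succ_sub, mul_sub]
  rw [Summable.tsum_sub ((hasSum_poissonWeight lam).summable.mul_right _)
    (summable_mul_of_abs_le (summable_abs_poissonWeight lam) hL), tsum_mul_right,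
    (hasSum_poissonWeight lam).tsum_eq, one_mul]

end

end DilutedPSpin

open DilutedPSpin

theorem quenched_pressure_deriv_series_general (N p : ℕ) (hN : 1 ≤ N) (β : ℝ)
    (lam : ℝ) :
    Summable (fun n : ℕ =>
      |(-1 : ℝ) ^ (n + 1) / (n + 1 : ℝ) * Real.tanh β ^ (n + 1) *
        overlapAvg N p β lam (n + 1)|) ∧
    HasDerivAt (fun l : ℝ => quenched N p l (fun k i => Real.log (Zdil N p β k i)))
      (Real.log (Real.cosh β) -
        ∑' n : ℕ, (-1 : ℝ) ^ (n + 1) / (n + 1 : ℝ) * Real.tanh β ^ (n + 1) *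
          overlapAvg N p β lam (n + 1))
      lam := by
  have : Nonempty (Fin N) := ⟨⟨0, hN⟩⟩
  have hoverlap : ∀ n, overlapAvg N p β lam n
      = ∑' k, poissonWeight lam k * avgOverlapPow N p β k n := fun n =>
    quenched_eq_tsum lam _
  have hbound : ∀ n, |overlapAvg N p β lam n| ≤ ∑' k, |poissonWeight lam k| := fun n => by
    rw [hoverlap]
    exact (abs_tsum_mul_le (summable_abs_poissonWeight lam) fun k =>
      abs_avgOverlapPow_le_one β k n).trans_eq (mul_one _)
  refine ⟨.of_nonneg_of_le (fun n => abs_nonneg _) (fun n => ?_)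
    ((summable_abs_logCoeff_tanh β).mul_right (∑' k, |poissonWeight lam k|)), ?_⟩
  · show |logCoeff (Real.tanh β) n * overlapAvg N p β lam (n + 1)| ≤ _
    rw [abs_mul]
    exact mul_le_mul_of_nonneg_left (hbound _) (abs_nonneg _)
  · refine (hasDerivAt_quenched_log_Zdil β lam).congr_deriv ?_
    simp only [hoverlap]
    rw [tsum_mul_tsum_mul_comm (summable_abs_poissonWeight lam) (summable_abs_logCoeff_tanh β)
      fun k n => abs_avgOverlapPow_le_one β k (n + 1)]
    rfl

/-- Exact multi-overlap series for the derivative of the quenched pressure: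
F′(λ) = ln cosh β − Σ_{n≥1} ((−1)^n/n) (tanh β)^n ⟨q_{1…n}^p⟩_λ, the series being
absolutely convergent. -/
theorem quenched_pressure_deriv_series (N p : ℕ) (hN : 1 ≤ N) (hp : 1 ≤ p) (β : ℝ)
    (lam : ℝ) (hlam : 0 < lam) :
    Summable (fun n : ℕ =>
      |(-1 : ℝ) ^ (n + 1) / (n + 1 : ℝ) * Real.tanh β ^ (n + 1) *
        overlapAvg N p β lam (n + 1)|) ∧
    HasDerivAt (fun l : ℝ => quenched N p l (fun k i => Real.log (Zdil N p β k i)))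
      (Real.log (Real.cosh β) -
        ∑' n : ℕ, (-1 : ℝ) ^ (n + 1) / (n + 1 : ℝ) * Real.tanh β ^ (n + 1) *
          overlapAvg N p β lam (n + 1))
      lam :=
  quenched_pressure_deriv_series_general N p hN β lam
end

section
/- Let p ≥ 2 be even, N ≥ 1, β ∈ ℝ, k₁, k₂ ∈ ℕ, index families i : Fin k₁ → (Fin N)^p and j : Fin k₂ → (Fin N)^{p−1}, and s ≥ 1 replicas. For each a = 1,…,s fix n_a ∈ ℕ and sites r^a_1,…,r^a_{n_a} ∈ Fin N, and set Q(σ^1,…,σ^s) = Π_{a=1}^s Π_{l=1}^{n_a} σ^a(r^a_l). Let Ω_{N+1} be the s-fold product Gibbs average on ({−1,1}^{N+1})^s for the decomposed Hamiltonian −Σ_ν σ(i_ν(1))⋯σ(i_ν(p)) − σ(N+1) Σ_ν σ(j_ν(1))⋯σ(j_ν(p−1)), and Ω̃_N the s-fold product Gibbs average on ({−1,1}^N)^s for the perturbed Hamiltonian −Σ_ν σ(i_ν(1))⋯σ(i_ν(p)) − Σ_ν σ(j_ν(1))⋯σ(j_ν(p−1)). Then Ω_{N+1}( Q · Π_{a=1}^s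 (σ^a(N+1))^{n_a} ) = Ω̃_N( Q ). (This is the exact finite-size, multi-replica gauge identity from which the paper's Theorem 3 — ⟨Q_{ab}⟩_t → ⟨q_{ab}Q_{ab}⟩, i.e. non-filled monomials get filled — follows.) -/
lemma spin_beq (a b : Bool) : spin (a == b) = spin a * spin b := by
  cases a <;> cases b <;> simp [spin]

lemma spin_mul_self (b : Bool) : spin b * spin b = 1 := by
  cases b <;> simp [spin]

lemma spin_pow_of_even (b : Bool) {m : ℕ} (hm : Even m) : spin b ^ m = 1 := by
  obtain ⟨k, rfl⟩ := hm
  rw [← two_mul, pow_mul, sq, spin_mul_self, one_pow]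

/-- `(τ, ε) ↦ σ` with `σ(m) = τ(m) ε` for `m < N` and `σ(N) = ε`, in `Bool` encoding. -/
def gaugeEquiv (N : ℕ) : (Fin N → Bool) × Bool ≃ (Fin (N + 1) → Bool) where
  toFun x := Fin.snoc (fun m => x.1 m == x.2) x.2
  invFun σ := (fun m => σ m.castSucc == σ (Fin.last N), σ (Fin.last N))
  left_inv x := by simp
  right_inv σ := by
    funext x
    refine Fin.lastCases ?_ (fun m => ?_) x <;> simp

section Gauge

variable {N : ℕ} {ι₁ ι₂ : Type*} [Fintype ι₁] [Fintype ι₂]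

/-- `-β H` for the decomposed `(N+1)`-spin Hamiltonian. -/
noncomputable def decomposedLogWeight {p : ℕ} (β : ℝ) (i : ι₁ → Fin p → Fin N)
    (j : ι₂ → Fin (p - 1) → Fin N) (σ : Fin (N + 1) → Bool) : ℝ :=
  β * ∑ ν, ∏ l, spin (σ (i ν l).castSucc)
    + β * spin (σ (Fin.last N)) * ∑ ν, ∏ l, spin (σ (j ν l).castSucc)

/-- `-β H` for the perturbed `N`-spin Hamiltonian. -/
noncomputable def perturbedLogWeight {p : ℕ} (β : ℝ) (i : ι₁ → Fin p → Fin N)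
    (j : ι₂ → Fin (p - 1) → Fin N) (τ : Fin N → Bool) : ℝ :=
  β * ∑ ν, ∏ l, spin (τ (i ν l)) + β * ∑ ν, ∏ l, spin (τ (j ν l))

variable (τ : Fin N → Bool) (ε : Bool)

@[simp]
lemma gaugeEquiv_last : gaugeEquiv N (τ, ε) (Fin.last N) = ε := by
  simp [gaugeEquiv]

lemma spin_gaugeEquiv_castSucc (m : Fin N) :
    spin (gaugeEquiv N (τ, ε) m.castSucc) = spin (τ m) * spin ε := by
  simp [gaugeEquiv, spin_beq]

lemma prod_spin_gaugeEquiv {k : ℕ} (x : Fin k → Fin N) :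
    ∏ l, spin (gaugeEquiv N (τ, ε) (x l).castSucc) = (∏ l, spin (τ (x l))) * spin ε ^ k := by
  simp [spin_gaugeEquiv_castSucc, Finset.prod_mul_distrib]

lemma monomial_gaugeEquiv {k : ℕ} (x : Fin k → Fin N) :
    (∏ l, spin (gaugeEquiv N (τ, ε) (x l).castSucc)) * spin (gaugeEquiv N (τ, ε) (Fin.last N)) ^ k
      = ∏ l, spin (τ (x l)) := by
  rw [prod_spin_gaugeEquiv, gaugeEquiv_last, mul_assoc, ← mul_pow, spin_mul_self, one_pow,
    mul_one]

lemma decomposedLogWeight_gaugeEquiv {p : ℕ} (hpeven : Even p) (hp : p ≠ 0) (β : ℝ)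
    (i : ι₁ → Fin p → Fin N) (j : ι₂ → Fin (p - 1) → Fin N) :
    decomposedLogWeight β i j (gaugeEquiv N (τ, ε)) = perturbedLogWeight β i j τ := by
  have hodd : spin ε * spin ε ^ (p - 1) = 1 := by
    rw [← pow_succ', Nat.sub_add_cancel (Nat.one_le_iff_ne_zero.mpr hp), spin_pow_of_even ε hpeven]
  simp only [decomposedLogWeight, perturbedLogWeight, prod_spin_gaugeEquiv, gaugeEquiv_last,
    spin_pow_of_even ε hpeven, mul_one, ← Finset.sum_mul]
  linear_combination β * (∑ ν, ∏ l, spin (τ (j ν l))) * hodd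

end Gauge

lemma sum_eq_two_mul_of_gaugeEquiv {N : ℕ} {F : (Fin (N + 1) → Bool) → ℝ}
    {G : (Fin N → Bool) → ℝ} (h : ∀ τ ε, F (gaugeEquiv N (τ, ε)) = G τ) :
    ∑ σ, F σ = 2 * ∑ τ, G τ := by
  rw [← (gaugeEquiv N).sum_comp, Fintype.sum_prod_type]
  simp [h, Finset.mul_sum, two_mul]

lemma gibbs_average_gaugeEquiv {N : ℕ} {f w : (Fin (N + 1) → Bool) → ℝ}
    {g w' : (Fin N → Bool) → ℝ} (hf : ∀ τ ε, f (gaugeEquiv N (τ, ε)) = g τ)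
    (hw : ∀ τ ε, w (gaugeEquiv N (τ, ε)) = w' τ) :
    (∑ σ, f σ * w σ) / ∑ σ, w σ = (∑ τ, g τ * w' τ) / ∑ τ, w' τ := by
  rw [sum_eq_two_mul_of_gaugeEquiv (fun τ ε => by rw [hf, hw]),
    sum_eq_two_mul_of_gaugeEquiv hw, mul_div_mul_left _ _ two_ne_zero]

lemma replica_average_prod {ι X : Type*} [Fintype ι] [DecidableEq ι] [Fintype X]
    (f : ι → X → ℝ) (w : X → ℝ) :
    (∑ σs : ι → X, ∏ a, f a (σs a) * w (σs a)) / (∑ σ, w σ) ^ Fintype.card ι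
      = ∏ a, (∑ σ, f a σ * w σ) / ∑ σ, w σ := by
  rw [Finset.prod_div_distrib, Finset.prod_const, Finset.card_univ, Fintype.prod_sum]

theorem multireplica_gauge_identity_general (p N : ℕ) (hpeven : Even p) (hp : 2 ≤ p)
    (β : ℝ) (k₁ k₂ : ℕ) (i : Fin k₁ → Fin p → Fin N)
    (j : Fin k₂ → Fin (p - 1) → Fin N) (s : ℕ)
    (n : Fin s → ℕ) (r : (a : Fin s) → Fin (n a) → Fin N) :
    (∑ σs : Fin s → (Fin (N + 1) → Bool),
        ((∏ a : Fin s, ∏ l : Fin (n a), spin (σs a ((r a l).castSucc))) *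
            ∏ a : Fin s, spin (σs a (Fin.last N)) ^ (n a)) *
          ∏ a : Fin s,
            Real.exp (β * ∑ ν : Fin k₁, ∏ l : Fin p, spin (σs a ((i ν l).castSucc))
              + β * spin (σs a (Fin.last N)) *
                  ∑ ν : Fin k₂, ∏ l : Fin (p - 1), spin (σs a ((j ν l).castSucc))))
      / (∑ σ : Fin (N + 1) → Bool,
          Real.exp (β * ∑ ν : Fin k₁, ∏ l : Fin p, spin (σ ((i ν l).castSucc))
            + β * spin (σ (Fin.last N)) *
                ∑ ν : Fin k₂, ∏ l : Fin (p - 1), spin (σ ((j ν l).castSucc)))) ^ s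
    = (∑ σs : Fin s → (Fin N → Bool),
          (∏ a : Fin s, ∏ l : Fin (n a), spin (σs a (r a l))) *
            ∏ a : Fin s,
              Real.exp (β * ∑ ν : Fin k₁, ∏ l : Fin p, spin (σs a (i ν l))
                + β * ∑ ν : Fin k₂, ∏ l : Fin (p - 1), spin (σs a (j ν l))))
        / (∑ σ : Fin N → Bool,
            Real.exp (β * ∑ ν : Fin k₁, ∏ l : Fin p, spin (σ (i ν l))
              + β * ∑ ν : Fin k₂, ∏ l : Fin (p - 1), spin (σ (j ν l)))) ^ s := by
  simp only [← Finset.prod_mul_distrib]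
  have decomposed_factors := replica_average_prod
    (fun a σ => (∏ l, spin (σ (r a l).castSucc)) * spin (σ (Fin.last N)) ^ n a)
    (fun σ => Real.exp (decomposedLogWeight β i j σ))
  have perturbed_factors := replica_average_prod (fun a τ => ∏ l, spin (τ (r a l)))
    (fun τ => Real.exp (perturbedLogWeight β i j τ))
  rw [Fintype.card_fin] at decomposed_factors perturbed_factors
  refine decomposed_factors.trans (Eq.trans ?_ perturbed_factors.symm)
  refine Finset.prod_congr rfl fun a _ => gibbs_average_gaugeEquiv
    (fun τ ε => monomial_gaugeEquiv τ ε (r a)) (fun τ ε => ?_)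
  rw [decomposedLogWeight_gaugeEquiv τ ε hpeven (by omega)]

/-- Multi-replica gauge identity: the s-fold product Gibbs average in the decomposed
(N+1)-spin system of a spin monomial Q times Π_a σ^a(N+1)^{n_a} equals the s-fold
product Gibbs average of Q in the perturbed N-spin system. -/
theorem multireplica_gauge_identity (p N : ℕ) (hpeven : Even p) (hp : 2 ≤ p)
    (hN : 1 ≤ N) (β : ℝ) (k₁ k₂ : ℕ) (i : Fin k₁ → Fin p → Fin N)
    (j : Fin k₂ → Fin (p - 1) → Fin N) (s : ℕ) (hs : 1 ≤ s)
    (n : Fin s → ℕ) (r : (a : Fin s) → Fin (n a) → Fin N) :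
    (∑ σs : Fin s → (Fin (N + 1) → Bool),
        ((∏ a : Fin s, ∏ l : Fin (n a), spin (σs a ((r a l).castSucc))) *
            ∏ a : Fin s, spin (σs a (Fin.last N)) ^ (n a)) *
          ∏ a : Fin s,
            Real.exp (β * ∑ ν : Fin k₁, ∏ l : Fin p, spin (σs a ((i ν l).castSucc))
              + β * spin (σs a (Fin.last N)) *
                  ∑ ν : Fin k₂, ∏ l : Fin (p - 1), spin (σs a ((j ν l).castSucc))))
      / (∑ σ : Fin (N + 1) → Bool,
          Real.exp (β * ∑ ν : Fin k₁, ∏ l : Fin p, spin (σ ((i ν l).castSucc))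
            + β * spin (σ (Fin.last N)) *
                ∑ ν : Fin k₂, ∏ l : Fin (p - 1), spin (σ ((j ν l).castSucc)))) ^ s
    = (∑ σs : Fin s → (Fin N → Bool),
          (∏ a : Fin s, ∏ l : Fin (n a), spin (σs a (r a l))) *
            ∏ a : Fin s,
              Real.exp (β * ∑ ν : Fin k₁, ∏ l : Fin p, spin (σs a (i ν l))
                + β * ∑ ν : Fin k₂, ∏ l : Fin (p - 1), spin (σs a (j ν l))))
        / (∑ σ : Fin N → Bool,
            Real.exp (β * ∑ ν : Fin k₁, ∏ l : Fin p, spin (σ (i ν l))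
              + β * ∑ ν : Fin k₂, ∏ l : Fin (p - 1), spin (σ (j ν l)))) ^ s :=
  multireplica_gauge_identity_general p N hpeven hp β k₁ k₂ i j s n r
end

section
/- Let p ≥ 2 be even, N ≥ 1, β ∈ ℝ, k₁, k₂ ∈ ℕ, index families i : Fin k₁ → (Fin N)^p and j : Fin k₂ → (Fin N)^{p−1}, and s ≥ 1 replicas. For each a fix n_a ∈ ℕ with n_a even, sites r^a_1,…,r^a_{n_a} ∈ Fin N, and set Q(σ^1,…,σ^s) = Π_{a=1}^s Π_{l=1}^{n_a} σ^a(r^a_l) (a 'filled' monomial: every replica appears an even number of times). Then the s-fold product Gibbs average of Q in the decomposed (N+1)-spin system equals its s-fold product Gibbs average in the perturbed N-spin system: Ω_{N+1}(Q) = Ω̃_N(Q). (This is the exact finite-N content of the paper's Theorem 4: averages of filled overlap monomials are unaffected by the cavity perturbation, i.e. they are stochastically stable.) -/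
lemma spin_not (b : Bool) : spin (!b) = - spin b := by
  cases b <;> simp [spin]

/-- Summing over all configurations is invariant under the global spin flip. -/
lemma sum_flip {M : ℕ} (f : (Fin M → Bool) → ℝ) :
    ∑ τ : Fin M → Bool, f τ = ∑ τ : Fin M → Bool, f (fun x => !(τ x)) := by
  have hg : Function.Bijective (fun τ : Fin M → Bool => fun x => !(τ x)) := by
    have hinv : Function.Involutive (fun τ : Fin M → Bool => fun x => !(τ x)) := by
      intro τ; funext x; simp
    exact hinv.bijective
  exact (Fintype.sum_bijective _ hg (fun τ => f (fun x => !(τ x))) f (fun τ => rfl)).symm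

/-- Splitting the sum over `(N+1)`-site configurations into the first `N` sites and
the last spin. -/
lemma sum_snoc {M : ℕ} (f : (Fin (M + 1) → Bool) → ℝ) :
    ∑ σ : Fin (M + 1) → Bool, f σ
      = ∑ τ : Fin M → Bool, ∑ b : Bool, f (Fin.snoc τ b) := by
  have h : ∑ σ : Fin (M + 1) → Bool, f σ
      = ∑ q : (Fin M → Bool) × Bool, f (Fin.snoc q.1 q.2) := by
    refine (Fintype.sum_bijective (fun σ : Fin (M + 1) → Bool =>
      ((fun x : Fin M => σ x.castSucc, σ (Fin.last M)) : (Fin M → Bool) × Bool)) ?_ f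
      (fun q => f (Fin.snoc q.1 q.2)) ?_)
    · constructor
      · intro σ σ' h
        have h1 : (fun x : Fin M => σ x.castSucc) = fun x => σ' x.castSucc :=
          congrArg Prod.fst h
        have h2 : σ (Fin.last M) = σ' (Fin.last M) := congrArg Prod.snd h
        funext x
        refine Fin.lastCases h2 (fun y => ?_) x
        exact congrFun h1 y
      · intro q
        refine ⟨Fin.snoc q.1 q.2, ?_⟩
        simp
    · intro σ
      congr 1
      exact (Fin.snoc_init_self σ).symm
  rw [h, Fintype.sum_prod_type]

/-- Product of negations picks up a sign `(-1)^m`. -/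
lemma prod_neg_eq {m : ℕ} (g : Fin m → ℝ) : ∏ l, -(g l) = (-1)^m * ∏ l, g l := by
  calc ∏ l, -(g l) = ∏ l, ((-1 : ℝ) * g l) := by simp only [neg_one_mul]
    _ = (∏ _l : Fin m, (-1:ℝ)) * ∏ l, g l := Finset.prod_mul_distrib
    _ = (-1)^m * ∏ l, g l := by simp

/-- The key per-replica identity: for quantities `Q`, `A` invariant under global spin
flip and `C` odd under it, summing out the last spin produces a factor `2`. -/
lemma key {N : ℕ} (β : ℝ) (A C Q : (Fin N → Bool) → ℝ)
    (hA : ∀ τ, A (fun x => !(τ x)) = A τ)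
    (hC : ∀ τ, C (fun x => !(τ x)) = - C τ)
    (hQ : ∀ τ, Q (fun x => !(τ x)) = Q τ) :
    ∑ σ : Fin (N + 1) → Bool,
        Q (fun x => σ x.castSucc) *
          Real.exp (A (fun x => σ x.castSucc)
            + β * spin (σ (Fin.last N)) * C (fun x => σ x.castSucc))
      = 2 * ∑ τ : Fin N → Bool, Q τ * Real.exp (A τ + β * C τ) := by
  rw [sum_snoc]
  have hterm : ∀ τ : Fin N → Bool, ∀ b : Bool,
      Q (fun x => (Fin.snoc τ b : Fin (N+1) → Bool) (Fin.castSucc x)) *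
        Real.exp (A (fun x => (Fin.snoc τ b : Fin (N+1) → Bool) (Fin.castSucc x))
          + β * spin ((Fin.snoc τ b : Fin (N+1) → Bool) (Fin.last N)) *
              C (fun x => (Fin.snoc τ b : Fin (N+1) → Bool) (Fin.castSucc x)))
        = Q τ * Real.exp (A τ + β * spin b * C τ) := by
    intro τ b
    have h1 : (fun x => (Fin.snoc τ b : Fin (N+1) → Bool) (Fin.castSucc x)) = τ := by
      funext x; simp
    rw [h1, Fin.snoc_last]
  simp only [hterm]
  have hb : ∀ τ : Fin N → Bool,
      ∑ b : Bool, Q τ * Real.exp (A τ + β * spin b * C τ)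
        = Q τ * Real.exp (A τ + β * C τ) + Q τ * Real.exp (A τ + β * (- C τ)) := by
    intro τ
    rw [Fintype.sum_bool]
    simp [spin]
  simp only [hb]
  rw [Finset.sum_add_distrib]
  have hflip : ∑ τ : Fin N → Bool, Q τ * Real.exp (A τ + β * (- C τ))
      = ∑ τ : Fin N → Bool, Q τ * Real.exp (A τ + β * C τ) := by
    rw [sum_flip fun τ => Q τ * Real.exp (A τ + β * (- C τ))]
    refine Finset.sum_congr rfl fun τ _ => ?_
    rw [hA, hC, hQ, neg_neg]
  rw [hflip, two_mul]

/-- Stochastic stability of filled monomials: if every replica appears an even number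
of times in the spin monomial Q, then its s-fold product Gibbs average in the
decomposed (N+1)-spin system equals its s-fold product Gibbs average in the perturbed
N-spin system. -/
theorem filled_monomials_stochastically_stable (p N : ℕ) (hpeven : Even p) (hp : 2 ≤ p)
    (hN : 1 ≤ N) (β : ℝ) (k₁ k₂ : ℕ) (i : Fin k₁ → Fin p → Fin N)
    (j : Fin k₂ → Fin (p - 1) → Fin N) (s : ℕ) (hs : 1 ≤ s)
    (n : Fin s → ℕ) (hneven : ∀ a : Fin s, Even (n a))
    (r : (a : Fin s) → Fin (n a) → Fin N) :
    (∑ σs : Fin s → (Fin (N + 1) → Bool),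
        (∏ a : Fin s, ∏ l : Fin (n a), spin (σs a ((r a l).castSucc))) *
          ∏ a : Fin s,
            Real.exp (β * ∑ ν : Fin k₁, ∏ l : Fin p, spin (σs a ((i ν l).castSucc))
              + β * spin (σs a (Fin.last N)) *
                  ∑ ν : Fin k₂, ∏ l : Fin (p - 1), spin (σs a ((j ν l).castSucc))))
      / (∑ σ : Fin (N + 1) → Bool,
          Real.exp (β * ∑ ν : Fin k₁, ∏ l : Fin p, spin (σ ((i ν l).castSucc))
            + β * spin (σ (Fin.last N)) *
                ∑ ν : Fin k₂, ∏ l : Fin (p - 1), spin (σ ((j ν l).castSucc)))) ^ s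
    = (∑ σs : Fin s → (Fin N → Bool),
          (∏ a : Fin s, ∏ l : Fin (n a), spin (σs a (r a l))) *
            ∏ a : Fin s,
              Real.exp (β * ∑ ν : Fin k₁, ∏ l : Fin p, spin (σs a (i ν l))
                + β * ∑ ν : Fin k₂, ∏ l : Fin (p - 1), spin (σs a (j ν l))))
        / (∑ σ : Fin N → Bool,
            Real.exp (β * ∑ ν : Fin k₁, ∏ l : Fin p, spin (σ (i ν l))
              + β * ∑ ν : Fin k₂, ∏ l : Fin (p - 1), spin (σ (j ν l)))) ^ s := by
  classical
  -- abbreviations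
  set A : (Fin N → Bool) → ℝ :=
    fun τ => β * ∑ ν : Fin k₁, ∏ l : Fin p, spin (τ (i ν l)) with hAdef
  set C : (Fin N → Bool) → ℝ :=
    fun τ => ∑ ν : Fin k₂, ∏ l : Fin (p - 1), spin (τ (j ν l)) with hCdef
  set Q : (a : Fin s) → (Fin N → Bool) → ℝ :=
    fun a τ => ∏ l : Fin (n a), spin (τ (r a l)) with hQdef
  -- flip invariance facts
  have hA : ∀ τ : Fin N → Bool, A (fun x => !(τ x)) = A τ := by
    intro τ
    simp only [hAdef]
    congr 1
    refine Finset.sum_congr rfl fun ν _ => ?_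
    calc ∏ l : Fin p, spin (!(τ (i ν l)))
        = ∏ l : Fin p, -spin (τ (i ν l)) := by
          exact Finset.prod_congr rfl fun l _ => spin_not _
      _ = (-1) ^ p * ∏ l : Fin p, spin (τ (i ν l)) := by
          exact prod_neg_eq _
      _ = ∏ l : Fin p, spin (τ (i ν l)) := by rw [hpeven.neg_one_pow, one_mul]
  have hC : ∀ τ : Fin N → Bool, C (fun x => !(τ x)) = - C τ := by
    intro τ
    simp only [hCdef]
    rw [← Finset.sum_neg_distrib]
    refine Finset.sum_congr rfl fun ν _ => ?_
    have hodd : Odd (p - 1) := by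
      obtain ⟨m, hm⟩ := hpeven
      refine ⟨m - 1, ?_⟩
      omega
    calc ∏ l : Fin (p - 1), spin (!(τ (j ν l)))
        = ∏ l : Fin (p - 1), -spin (τ (j ν l)) := by
          exact Finset.prod_congr rfl fun l _ => spin_not _
      _ = (-1) ^ (p - 1) * ∏ l : Fin (p - 1), spin (τ (j ν l)) := by
          exact prod_neg_eq _
      _ = - ∏ l : Fin (p - 1), spin (τ (j ν l)) := by
          rw [hodd.neg_one_pow]; ring
  have hQ : ∀ (a : Fin s) (τ : Fin N → Bool), Q a (fun x => !(τ x)) = Q a τ := by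
    intro a τ
    simp only [hQdef]
    calc ∏ l : Fin (n a), spin (!(τ (r a l)))
        = ∏ l : Fin (n a), -spin (τ (r a l)) := by
          exact Finset.prod_congr rfl fun l _ => spin_not _
      _ = (-1) ^ (n a) * ∏ l : Fin (n a), spin (τ (r a l)) := by
          exact prod_neg_eq _
      _ = ∏ l : Fin (n a), spin (τ (r a l)) := by
          rw [(hneven a).neg_one_pow, one_mul]
  -- per-replica numerator identity
  have hnum : ∀ a : Fin s,
      (∑ σ : Fin (N + 1) → Bool,
        Q a (fun x => σ x.castSucc) *
          Real.exp (A (fun x => σ x.castSucc)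
            + β * spin (σ (Fin.last N)) * C (fun x => σ x.castSucc)))
      = 2 * ∑ τ : Fin N → Bool, Q a τ * Real.exp (A τ + β * C τ) :=
    fun a => key β A C (Q a) hA hC (hQ a)
  have hden :
      (∑ σ : Fin (N + 1) → Bool,
        Real.exp (A (fun x => σ x.castSucc)
            + β * spin (σ (Fin.last N)) * C (fun x => σ x.castSucc)))
      = 2 * ∑ τ : Fin N → Bool, Real.exp (A τ + β * C τ) := by
    have := key β A C (fun _ => 1) hA hC (fun _ => rfl)
    simpa using this
  -- rewrite both sides
  have hLHSnum :
      (∑ σs : Fin s → (Fin (N + 1) → Bool),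
        (∏ a : Fin s, ∏ l : Fin (n a), spin (σs a ((r a l).castSucc))) *
          ∏ a : Fin s,
            Real.exp (β * ∑ ν : Fin k₁, ∏ l : Fin p, spin (σs a ((i ν l).castSucc))
              + β * spin (σs a (Fin.last N)) *
                  ∑ ν : Fin k₂, ∏ l : Fin (p - 1), spin (σs a ((j ν l).castSucc))))
      = ∏ a : Fin s, ∑ σ : Fin (N + 1) → Bool,
          Q a (fun x => σ x.castSucc) *
            Real.exp (A (fun x => σ x.castSucc)
              + β * spin (σ (Fin.last N)) * C (fun x => σ x.castSucc)) := by
    rw [Finset.prod_univ_sum, Fintype.piFinset_univ]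
    refine Finset.sum_congr rfl fun σs _ => ?_
    rw [← Finset.prod_mul_distrib]
  have hRHSnum :
      (∑ σs : Fin s → (Fin N → Bool),
        (∏ a : Fin s, ∏ l : Fin (n a), spin (σs a (r a l))) *
          ∏ a : Fin s,
            Real.exp (β * ∑ ν : Fin k₁, ∏ l : Fin p, spin (σs a (i ν l))
              + β * ∑ ν : Fin k₂, ∏ l : Fin (p - 1), spin (σs a (j ν l))))
      = ∏ a : Fin s, ∑ τ : Fin N → Bool, Q a τ * Real.exp (A τ + β * C τ) := by
    rw [Finset.prod_univ_sum, Fintype.piFinset_univ]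
    refine Finset.sum_congr rfl fun σs _ => ?_
    rw [← Finset.prod_mul_distrib]
  rw [hLHSnum, hRHSnum]
  have hdpos : (0:ℝ) < ∑ τ : Fin N → Bool, Real.exp (A τ + β * C τ) :=
    Finset.sum_pos (fun τ _ => Real.exp_pos _) Finset.univ_nonempty
  have hpow : ∀ (X : Type) [Fintype X] (f g : X → ℝ),
      ((∑ x : X, Real.exp (f x)) : ℝ) = (∑ x : X, Real.exp (f x)) := fun _ _ f g => rfl
  -- turn quotients into per-replica quotients
  rw [show ((∑ σ : Fin (N + 1) → Bool,
          Real.exp (β * ∑ ν : Fin k₁, ∏ l : Fin p, spin (σ ((i ν l).castSucc))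
            + β * spin (σ (Fin.last N)) *
                ∑ ν : Fin k₂, ∏ l : Fin (p - 1), spin (σ ((j ν l).castSucc)))))
      = 2 * ∑ τ : Fin N → Bool, Real.exp (A τ + β * C τ) from hden]
  calc (∏ a : Fin s, ∑ σ : Fin (N + 1) → Bool,
          Q a (fun x => σ x.castSucc) *
            Real.exp (A (fun x => σ x.castSucc)
              + β * spin (σ (Fin.last N)) * C (fun x => σ x.castSucc)))
        / (2 * ∑ τ : Fin N → Bool, Real.exp (A τ + β * C τ)) ^ s
      = (∏ a : Fin s, 2 * ∑ τ : Fin N → Bool, Q a τ * Real.exp (A τ + β * C τ))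
        / (2 * ∑ τ : Fin N → Bool, Real.exp (A τ + β * C τ)) ^ s := by
        rw [Finset.prod_congr rfl fun a _ => hnum a]
    _ = (2 ^ s * ∏ a : Fin s, ∑ τ : Fin N → Bool, Q a τ * Real.exp (A τ + β * C τ))
        / (2 ^ s * (∑ τ : Fin N → Bool, Real.exp (A τ + β * C τ)) ^ s) := by
        rw [Finset.prod_mul_distrib, Finset.prod_const, Finset.card_univ,
          Fintype.card_fin, mul_pow]
    _ = (∏ a : Fin s, ∑ τ : Fin N → Bool, Q a τ * Real.exp (A τ + β * C τ))
        / (∑ τ : Fin N → Bool, Real.exp (A τ + β * C τ)) ^ s := by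
        rw [mul_div_mul_left]
        positivity
end
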